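/- arXiv:1311.1730 — 2 statements merged into one kernel-verified Lean document; each statement's English description precedes it below -/
import Mathlib

section
/- Let q be a power of an odd prime and let G = 1 + 𝔤 be a pattern subgroup of UT_n(F_{q^k}), regarded over F_q, with † an involutive F_q-algebra antiautomorphism of 𝔤 satisfying (α e_ij)† ∈ F_{q^k}^× e_{j̄ ī} for all α ∈ F_{q^k}^×, and let 𝔲 = {x ∈ 𝔤 | x† = −x}. If x ∈ 𝔲 and g ∈ G are such that gx ∈ 𝔲, then there exists h ∈ G with gx = h x h†. -/
open Matrix

section PatternGroups

variable (F : Type) [Field F] (E : Type) [Field E] [Algebra F E] {n : ℕ}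

/-- The pattern subalgebra `𝔤 ⊆ 𝔲𝔱_n(E)` of matrices supported on the set `S` of strict
relations `i ≺ j` of a subposet of the usual linear order on `[n]`. -/
def patAlg (S : Set (Fin n × Fin n)) : Set (Matrix (Fin n) (Fin n) E) :=
  {x | ∀ i j : Fin n, (i, j) ∉ S → x i j = 0}

/-- The pattern subgroup `G = 1 + 𝔤`. -/
def patGrp (S : Set (Fin n × Fin n)) : Set (Matrix (Fin n) (Fin n) E) :=
  {g | ∃ x ∈ patAlg E S, g = 1 + x}

/-- The two-sided ideal `𝔥 = {x ∈ 𝔤 | x_{ij} = 0 if j ≤ n/2}` (indices read 1-based). -/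
def patHAlg (S : Set (Fin n × Fin n)) : Set (Matrix (Fin n) (Fin n) E) :=
  {x | x ∈ patAlg E S ∧ ∀ i j : Fin n, (j : ℕ) + 1 ≤ n / 2 → x i j = 0}

/-- The normal subgroup `H = 1 + 𝔥` of `G`. -/
def patHGrp (S : Set (Fin n × Fin n)) : Set (Matrix (Fin n) (Fin n) E) :=
  {g | ∃ x ∈ patHAlg E S, g = 1 + x}

/-- The extension of `†` from `𝔤` to `G = 1 + 𝔤`: `(1+x)† = 1 + x†`. -/
def dagGrp (dag : Matrix (Fin n) (Fin n) E → Matrix (Fin n) (Fin n) E)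
    (g : Matrix (Fin n) (Fin n) E) : Matrix (Fin n) (Fin n) E :=
  1 + dag (g - 1)

/-- The subgroup `U = {u ∈ G | u† = u⁻¹}` of the pattern group `G`. -/
def patUGrp (S : Set (Fin n × Fin n))
    (dag : Matrix (Fin n) (Fin n) E → Matrix (Fin n) (Fin n) E) :
    Set (Matrix (Fin n) (Fin n) E) :=
  {u | u ∈ patGrp E S ∧ u * dagGrp E dag u = 1 ∧ dagGrp E dag u * u = 1}

/-- The set `𝔲 = {x ∈ 𝔤 | x† = -x}`. -/
def patUAlg (S : Set (Fin n × Fin n))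
    (dag : Matrix (Fin n) (Fin n) E → Matrix (Fin n) (Fin n) E) :
    Set (Matrix (Fin n) (Fin n) E) :=
  {x | x ∈ patAlg E S ∧ dag x = -x}

/-- `†` is an involutive `F`-algebra antiautomorphism of the pattern algebra `𝔤` sending
each `α e_{ij}` (`α ∈ E^×`) into `E^× e_{\bar j \bar i}`, where `\bar i = n + 1 - i`. -/
structure IsPatternAntiInvolution (S : Set (Fin n × Fin n))
    (dag : Matrix (Fin n) (Fin n) E → Matrix (Fin n) (Fin n) E) : Prop where
  map_mem : ∀ x ∈ patAlg E S, dag x ∈ patAlg E S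
  map_add : ∀ x ∈ patAlg E S, ∀ y ∈ patAlg E S, dag (x + y) = dag x + dag y
  map_smul : ∀ (c : F), ∀ x ∈ patAlg E S,
    dag (algebraMap F E c • x) = algebraMap F E c • dag x
  map_mul : ∀ x ∈ patAlg E S, ∀ y ∈ patAlg E S, dag (x * y) = dag y * dag x
  invol : ∀ x ∈ patAlg E S, dag (dag x) = x
  elementary : ∀ i j : Fin n, (i, j) ∈ S → ∀ α : E, α ≠ 0 →
    ∃ β : E, β ≠ 0 ∧ dag (Matrix.single i j α) = Matrix.single j.rev i.rev β

/-- A Springer morphism: a bijection `f : G → 𝔤` with `f(U) = 𝔲` and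
`f(1+x) = x + Σ_{i ≥ 2} a_i x^i` with coefficients `a_i ∈ F`. -/
def IsSpringerMorphism (S : Set (Fin n × Fin n))
    (dag f : Matrix (Fin n) (Fin n) E → Matrix (Fin n) (Fin n) E) : Prop :=
  Set.BijOn f (patGrp E S) (patAlg E S) ∧
  f '' patUGrp E S dag = patUAlg E S dag ∧
  ∃ (N : ℕ) (a : ℕ → F), a 1 = 1 ∧
    ∀ x ∈ patAlg E S, f (1 + x) = ∑ i ∈ Finset.Ico 1 N, algebraMap F E (a i) • x ^ i

/-- The orbit `G · w = {g w g† | g ∈ G}` of `w` under the action `g · x = g x g†`. -/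
def patGrpDot (S : Set (Fin n × Fin n))
    (dag : Matrix (Fin n) (Fin n) E → Matrix (Fin n) (Fin n) E)
    (w : Matrix (Fin n) (Fin n) E) : Set (Matrix (Fin n) (Fin n) E) :=
  {z | ∃ g ∈ patGrp E S, z = g * w * dagGrp E dag g}

end PatternGroups

section Supercharacters

variable (F : Type) [Field F] (E : Type) [Field E] [Algebra F E] {n : ℕ}

/-- The orbit of `λ ∈ 𝔲*` under a subset `T ⊆ G` (for `T = G` or `T = H`), acting by
`(g·λ)(x) = λ(g⁻¹ · x) = λ(g⁻¹ x (g⁻¹)†)`.  An element `λ ∈ 𝔲*` is recorded as a function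
`𝔲 → F` (here represented via a functional `lam` on the full matrix space: only its values
on `𝔲` matter). -/
def patDualOrbit (S : Set (Fin n × Fin n))
    (dag : Matrix (Fin n) (Fin n) E → Matrix (Fin n) (Fin n) E)
    (T : Set (Matrix (Fin n) (Fin n) E))
    (lam : Module.Dual F (Matrix (Fin n) (Fin n) E)) :
    Set (↥(patUAlg E S dag) → F) :=
  {ψ | ∃ g ∈ T, ∀ x : ↥(patUAlg E S dag),
    ψ x = lam (g⁻¹ * (x : Matrix (Fin n) (Fin n) E) * dagGrp E dag g⁻¹)}

/-- The supercharacter `χ_λ = (|H·λ|/|G·λ|) Σ_{μ ∈ G·λ} θ ∘ μ ∘ f` of `U`, for `λ ∈ 𝔲*`. -/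
noncomputable def patSupchar (S : Set (Fin n × Fin n))
    (dag f : Matrix (Fin n) (Fin n) E → Matrix (Fin n) (Fin n) E)
    (θ : AddChar F ℂ) (lam : Module.Dual F (Matrix (Fin n) (Fin n) E))
    (u : Matrix (Fin n) (Fin n) E) : ℂ :=
  (Nat.card (patDualOrbit F E S dag (patHGrp E S) lam) : ℂ) /
    (Nat.card (patDualOrbit F E S dag (patGrp E S) lam) : ℂ) *
    ∑ᶠ ψ ∈ patDualOrbit F E S dag (patGrp E S) lam,
      @dite ℂ (f u ∈ patUAlg E S dag) (Classical.propDecidable _)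
        (fun h => θ (ψ ⟨f u, h⟩)) (fun _ => 0)

/-- The superclass `K_u = {v ∈ U | f(v) ∈ G · f(u)}` of `u`, as a subset of the ambient
matrix space. -/
def patSupclass (S : Set (Fin n × Fin n))
    (dag f : Matrix (Fin n) (Fin n) E → Matrix (Fin n) (Fin n) E)
    (u : Matrix (Fin n) (Fin n) E) : Set (Matrix (Fin n) (Fin n) E) :=
  {v | v ∈ patUGrp E S dag ∧ f v ∈ patGrpDot E S dag (f u)}

end Supercharacters

/-!
Write `g = 1 + a` with `a ∈ 𝔤`. Applying `†` to `g x ∈ 𝔲` gives `a x = x a†`, hence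
`P(a) x = x P(a†)` for every polynomial `P` over `F`. As `a` is nilpotent and `2` is invertible,
a truncated binomial series for `√(1 + a)` gives `b = P(a)` with `P(0) = 0` and `(1 + b)² = 1 + a`.
On polynomials in `a` without constant term `†` acts as `P(a) ↦ P(a†)`, so `b† = P(a†)` and
`h = 1 + b` satisfies `h x h† = h (x + x b†) = h (1 + b) x = g x`.
-/

open Polynomial

/-- The witnesses are the truncations of the binomial series of `√(1 + X) - 1`, obtained by
iterating `P ↦ P - ((1 + P)² - (1 + X)) / 2`. -/
theorem Polynomial.exists_X_dvd_and_X_pow_dvd_one_add_sq_sub {F : Type*} [Field F]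
    (h2 : (2 : F) ≠ 0) (k : ℕ) :
    ∃ P : F[X], X ∣ P ∧ X ^ (k + 1) ∣ (1 + P) ^ 2 - (1 + X) := by
  induction k with
  | zero => exact ⟨0, dvd_zero X, ⟨-1, by ring⟩⟩
  | succ k ih =>
    obtain ⟨_, ⟨Q, rfl⟩, R, hR⟩ := ih
    have hc : C (2⁻¹ : F) * 2 = 1 := by
      rw [← C_ofNat, ← C_mul, inv_mul_cancel₀ h2, C_1]
    refine ⟨X * Q - C 2⁻¹ * (X ^ (k + 1) * R), ?_, ?_⟩
    · rw [pow_succ', mul_assoc]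
      exact dvd_sub (dvd_mul_right X Q) ((dvd_mul_right X _).mul_left _)
    · exact ⟨C 2⁻¹ ^ 2 * X ^ k * R ^ 2 - R * Q, by
        linear_combination hR - X ^ (k + 1) * R * (1 + X * Q) * hc⟩

theorem IsNilpotent.exists_sq_one_add_aeval_eq {F A : Type*} [Field F] [Ring A] [Algebra F A]
    (h2 : (2 : F) ≠ 0) {a : A} (ha : IsNilpotent a) :
    ∃ P : F[X], X ∣ P ∧ (1 + aeval a P) ^ 2 = 1 + a := by
  obtain ⟨N, hN⟩ := ha
  obtain ⟨P, hP, R, hR⟩ := exists_X_dvd_and_X_pow_dvd_one_add_sq_sub h2 N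
  refine ⟨P, hP, sub_eq_zero.mp ?_⟩
  simpa [_root_.pow_succ, hN] using congrArg (aeval a) hR

theorem SemiconjBy.aeval {R A : Type*} [CommSemiring R] [Semiring A] [Algebra R A]
    {x c d : A} (h : SemiconjBy x c d) (P : R[X]) :
    SemiconjBy x (aeval c P) (aeval d P) := by
  induction P using Polynomial.induction_on' with
  | add P Q hP hQ => simpa only [map_add] using hP.add_right hQ
  | monomial m r =>
    simpa only [aeval_monomial] using
      SemiconjBy.mul_right (Algebra.commute_algebraMap_right r x) (h.pow_right m)

section PatternAlgebra

variable {F E : Type} [Field F] [Field E] [Algebra F E] {n : ℕ} {S : Set (Fin n × Fin n)}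
  {a x : Matrix (Fin n) (Fin n) E}

theorem add_mem_patAlg {y : Matrix (Fin n) (Fin n) E} (hx : x ∈ patAlg E S)
    (hy : y ∈ patAlg E S) : x + y ∈ patAlg E S := fun i j h => by
  simp [hx i j h, hy i j h]

theorem smul_mem_patAlg (c : F) (hx : x ∈ patAlg E S) : c • x ∈ patAlg E S := fun i j h => by
  simp [hx i j h]

theorem mul_mem_patAlg (hS : ∀ i j k : Fin n, (i, j) ∈ S → (j, k) ∈ S → (i, k) ∈ S)
    {y : Matrix (Fin n) (Fin n) E} (hx : x ∈ patAlg E S) (hy : y ∈ patAlg E S) :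
    x * y ∈ patAlg E S := by
  intro i k hik
  rw [mul_apply]
  refine Finset.sum_eq_zero fun j _ => ?_
  by_cases hij : (i, j) ∈ S
  · have hjk : (j, k) ∉ S := fun hjk => hik (hS i j k hij hjk)
    rw [hy j k hjk, mul_zero]
  · rw [hx i j hij, zero_mul]

theorem pow_apply_eq_zero_of_mem_patAlg (hS : ∀ p ∈ S, p.1 < p.2) (ha : a ∈ patAlg E S)
    (k : ℕ) (i j : Fin n) (hij : (j : ℕ) < i + k) : (a ^ k) i j = 0 := by
  induction k generalizing j with
  | zero => exact one_apply_ne (by rintro rfl; omega)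
  | succ k ih =>
    rw [pow_succ, mul_apply]
    refine Finset.sum_eq_zero fun m _ => ?_
    by_cases hmj : (m : ℕ) < j
    · rw [ih m (by omega), zero_mul]
    · have : (m, j) ∉ S := fun h => hmj (hS _ h)
      rw [ha m j this, mul_zero]

theorem isNilpotent_of_mem_patAlg (hS : ∀ p ∈ S, p.1 < p.2) (ha : a ∈ patAlg E S) :
    IsNilpotent a :=
  ⟨n, ext fun i j => pow_apply_eq_zero_of_mem_patAlg hS ha n i j (by omega)⟩

variable {dag : Matrix (Fin n) (Fin n) E → Matrix (Fin n) (Fin n) E}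

theorem pow_succ_mem_patAlg (hS : ∀ i j k : Fin n, (i, j) ∈ S → (j, k) ∈ S → (i, k) ∈ S)
    (ha : a ∈ patAlg E S) (m : ℕ) : a ^ (m + 1) ∈ patAlg E S := by
  induction m with
  | zero => simpa using ha
  | succ m ih => rw [pow_succ]; exact mul_mem_patAlg hS ih ha

theorem aeval_mem_patAlg (hS : ∀ i j k : Fin n, (i, j) ∈ S → (j, k) ∈ S → (i, k) ∈ S)
    (ha : a ∈ patAlg E S) {P : F[X]} (hP : X ∣ P) :
    aeval a P ∈ patAlg E S := by
  obtain ⟨Q, rfl⟩ := hP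
  induction Q using Polynomial.induction_on' with
  | add Q R hQ hR => rw [mul_add, map_add]; exact add_mem_patAlg hQ hR
  | monomial m c =>
    rw [X_mul_monomial, aeval_monomial, ← Algebra.smul_def]
    exact smul_mem_patAlg c (pow_succ_mem_patAlg hS ha m)

theorem IsPatternAntiInvolution.map_smul' (hdag : IsPatternAntiInvolution F E S dag) (c : F)
    (hx : x ∈ patAlg E S) :
    dag (c • x) = c • dag x := by
  simpa only [algebraMap_smul] using hdag.map_smul c x hx

theorem IsPatternAntiInvolution.map_pow_succ (hdag : IsPatternAntiInvolution F E S dag)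
    (hS : ∀ i j k : Fin n, (i, j) ∈ S → (j, k) ∈ S → (i, k) ∈ S) (ha : a ∈ patAlg E S) (m : ℕ) :
    dag (a ^ (m + 1)) = dag a ^ (m + 1) := by
  induction m with
  | zero => simp
  | succ m ih =>
    rw [pow_succ, hdag.map_mul _ (pow_succ_mem_patAlg hS ha m) _ ha, ih, ← pow_succ']

/-- Polynomials in `a` commute, so the antiautomorphism `†` is multiplicative on them. -/
theorem IsPatternAntiInvolution.map_aeval (hdag : IsPatternAntiInvolution F E S dag)
    (hS : ∀ i j k : Fin n, (i, j) ∈ S → (j, k) ∈ S → (i, k) ∈ S) (ha : a ∈ patAlg E S)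
    {P : F[X]} (hP : X ∣ P) :
    dag (aeval a P) = aeval (dag a) P := by
  obtain ⟨Q, rfl⟩ := hP
  induction Q using Polynomial.induction_on' with
  | add Q R hQ hR =>
    rw [mul_add, _root_.map_add, _root_.map_add,
      hdag.map_add _ (aeval_mem_patAlg hS ha (dvd_mul_right X Q))
        _ (aeval_mem_patAlg hS ha (dvd_mul_right X R)), hQ, hR]
  | monomial m c =>
    simp only [X_mul_monomial, aeval_monomial, ← Algebra.smul_def]
    rw [hdag.map_smul' c (pow_succ_mem_patAlg hS ha m), hdag.map_pow_succ hS ha]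

theorem IsPatternAntiInvolution.mul_eq_mul_map_of_mem_patUAlg
    (hdag : IsPatternAntiInvolution F E S dag)
    (hS : ∀ i j k : Fin n, (i, j) ∈ S → (j, k) ∈ S → (i, k) ∈ S) (hx : x ∈ patUAlg E S dag)
    (ha : a ∈ patAlg E S) (hax : (1 + a) * x ∈ patUAlg E S dag) : a * x = x * dag a := by
  have h := hax.2
  rw [add_mul, one_mul, hdag.map_add _ hx.1 _ (mul_mem_patAlg hS ha hx.1),
    hdag.map_mul _ ha _ hx.1, hx.2, neg_add, neg_mul] at h
  exact (neg_injective (add_left_cancel h)).symm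

end PatternAlgebra

theorem dagGrp_one_add {E : Type} [Field E] {n : ℕ}
    (dag : Matrix (Fin n) (Fin n) E → Matrix (Fin n) (Fin n) E) (b : Matrix (Fin n) (Fin n) E) :
    dagGrp E dag (1 + b) = 1 + dag b := by
  rw [dagGrp, add_sub_cancel_left]

theorem left_multiple_in_u_is_twisted_conjugate_general
    (F : Type) [Field F] (E : Type) [Field E] [Algebra F E]
    (hodd : ringChar F ≠ 2)
    {n : ℕ} (S : Set (Fin n × Fin n))
    (hS1 : ∀ p ∈ S, p.1 < p.2)
    (hS2 : ∀ i j k : Fin n, (i, j) ∈ S → (j, k) ∈ S → (i, k) ∈ S)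
    (dag : Matrix (Fin n) (Fin n) E → Matrix (Fin n) (Fin n) E)
    (hdag : IsPatternAntiInvolution F E S dag) :
    ∀ x ∈ patUAlg E S dag, ∀ g ∈ patGrp E S, g * x ∈ patUAlg E S dag →
      ∃ h ∈ patGrp E S, g * x = h * x * dagGrp E dag h := by
  rintro x hx _ ⟨a, ha, rfl⟩ hax
  obtain ⟨P, hP, hsq⟩ :=
    (isNilpotent_of_mem_patAlg hS1 ha).exists_sq_one_add_aeval_eq (Ring.two_ne_zero hodd)
  set b := aeval a P
  have hxa : SemiconjBy x (dag a) a := (hdag.mul_eq_mul_map_of_mem_patUAlg hS2 hx ha hax).symm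
  have hxb : x * dag b = b * x := by
    rw [hdag.map_aeval hS2 ha hP]
    exact hxa.aeval P
  refine ⟨1 + b, ⟨b, aeval_mem_patAlg hS2 ha hP, rfl⟩, ?_⟩
  calc (1 + a) * x = (1 + b) ^ 2 * x := by rw [hsq]
    _ = (1 + b) * (x + b * x) := by noncomm_ring
    _ = (1 + b) * x * dagGrp E dag (1 + b) := by rw [dagGrp_one_add, ← hxb]; noncomm_ring

/-- With `G = 1 + 𝔤` a pattern subgroup and `†` an anti-involution as above,
and `𝔲 = {x ∈ 𝔤 | x† = −x}`: if `x ∈ 𝔲` and `g ∈ G` are such that `gx ∈ 𝔲`, then there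
exists `h ∈ G` with `gx = h x h†`. -/
theorem left_multiple_in_u_is_twisted_conjugate
    (F : Type) [Field F] [Fintype F] (E : Type) [Field E] [Fintype E] [Algebra F E]
    (hodd : ringChar F ≠ 2)
    {n : ℕ} (S : Set (Fin n × Fin n))
    (hS1 : ∀ p ∈ S, p.1 < p.2)
    (hS2 : ∀ i j k : Fin n, (i, j) ∈ S → (j, k) ∈ S → (i, k) ∈ S)
    (dag : Matrix (Fin n) (Fin n) E → Matrix (Fin n) (Fin n) E)
    (hdag : IsPatternAntiInvolution F E S dag) :
    ∀ x ∈ patUAlg E S dag, ∀ g ∈ patGrp E S, g * x ∈ patUAlg E S dag →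
      ∃ h ∈ patGrp E S, g * x = h * x * dagGrp E dag h :=
  left_multiple_in_u_is_twisted_conjugate_general F E hodd S hS1 hS2 dag hdag
end

section
/- Let q be a power of an odd prime and let G = 1 + 𝔤 be a pattern subgroup of UT_n(F_{q^k}), regarded over F_q, with † an involutive F_q-algebra antiautomorphism of 𝔤 satisfying (α e_ij)† ∈ F_{q^k}^× e_{j̄ ī} for all α ∈ F_{q^k}^×. Let 𝔥 = {x ∈ 𝔤 | x_ij = 0 if j ≤ n/2}. For λ ∈ 𝔤*, set 𝔩_λ = {x ∈ 𝔤 | λ(yx) = 0 for all y ∈ 𝔥}, 𝔯_λ = {x ∈ 𝔤 | λ(xy) = 0 for all y ∈ 𝔥†}, and 𝔤_λ = 𝔩_λ ∩ 𝔯_λ. Then λ(xy) = 0 for all x, y ∈ 𝔤_λ. -/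
open Matrix

/-!
Let `m = ⌊n/2⌋` and let `P` be the diagonal idempotent onto the coordinates `1, …, m`. In
`x y = (x (1 - P)) y + x (P y)` the matrix `x (1 - P)` has no columns `≤ m`, so it lies in `𝔥`
and `λ((x (1 - P)) y) = 0` as `y ∈ 𝔩_λ`. The matrix `P y` has no rows `> m`; since `†` moves
the entry `(i, j)` to `(j̄, ī)`, `(P y)†` has no columns `≤ n - m`, hence lies in `𝔥`, and
`λ(x (P y)) = λ(x ((P y)†)†) = 0` as `x ∈ 𝔯_λ`.
-/

section PatternAlgebra

variable {E : Type} [Field E] {n : ℕ} {S : Set (Fin n × Fin n)}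

lemma sum_mem_patAlg {ι : Type*} {t : Finset ι} {g : ι → Matrix (Fin n) (Fin n) E}
    (hg : ∀ p ∈ t, g p ∈ patAlg E S) : ∑ p ∈ t, g p ∈ patAlg E S := fun i j hij => by
  rw [Matrix.sum_apply]
  exact Finset.sum_eq_zero fun p hp => hg p hp i j hij

lemma single_apply_mem_patAlg {x : Matrix (Fin n) (Fin n) E} (hx : x ∈ patAlg E S)
    (i j : Fin n) : single i j (x i j) ∈ patAlg E S := by
  intro k l hkl
  by_cases hij : i = k ∧ j = l
  · obtain ⟨rfl, rfl⟩ := hij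
    rw [single_apply_same, hx i j hkl]
  · exact Matrix.single_apply_of_ne _ _ _ _ _ hij

lemma diagonal_mul_mem_patAlg {y : Matrix (Fin n) (Fin n) E} (hy : y ∈ patAlg E S)
    (d : Fin n → E) : diagonal d * y ∈ patAlg E S := fun i j hij => by
  rw [diagonal_mul, hy i j hij, mul_zero]

lemma mul_diagonal_mem_patHAlg {x : Matrix (Fin n) (Fin n) E} (hx : x ∈ patAlg E S)
    {d : Fin n → E} (hd : ∀ j : Fin n, (j : ℕ) + 1 ≤ n / 2 → d j = 0) :
    x * diagonal d ∈ patHAlg E S :=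
  ⟨fun i j hij => by rw [mul_diagonal, hx i j hij, zero_mul],
    fun i j hj => by rw [mul_diagonal, hd j hj, mul_zero]⟩

end PatternAlgebra

namespace IsPatternAntiInvolution

variable {F : Type} [Field F] {E : Type} [Field E] [Algebra F E] {n : ℕ}
  {S : Set (Fin n × Fin n)} {dag : Matrix (Fin n) (Fin n) E → Matrix (Fin n) (Fin n) E}

theorem map_zero (h : IsPatternAntiInvolution F E S dag) : dag 0 = 0 := by
  simpa using h.map_smul 0 0 fun _ _ _ => rfl

theorem map_sum (h : IsPatternAntiInvolution F E S dag) {ι : Type*} (t : Finset ι)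
    {g : ι → Matrix (Fin n) (Fin n) E} (hg : ∀ p ∈ t, g p ∈ patAlg E S) :
    dag (∑ p ∈ t, g p) = ∑ p ∈ t, dag (g p) := by
  classical
  induction t using Finset.induction_on with
  | empty => simpa using h.map_zero
  | insert a s ha ih =>
    have hs : ∀ p ∈ s, g p ∈ patAlg E S := fun p hp => hg p (Finset.mem_insert_of_mem hp)
    rw [Finset.sum_insert ha, Finset.sum_insert ha,
      h.map_add _ (hg a (Finset.mem_insert_self a s)) _ (sum_mem_patAlg hs), ih hs]

theorem apply_eq_zero_of_apply_rev_eq_zero (h : IsPatternAntiInvolution F E S dag)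
    {w : Matrix (Fin n) (Fin n) E} (hw : w ∈ patAlg E S) {k l : Fin n}
    (hwlk : w l.rev k.rev = 0) : dag w k l = 0 := by
  have hsingle : ∀ i j, dag (single i j (w i j)) k l = 0 := by
    intro i j
    by_cases hwij : w i j = 0
    · rw [hwij, single_zero, h.map_zero, Matrix.zero_apply]
    obtain ⟨β, -, hβ⟩ := h.elementary i j (not_not.1 (mt (hw i j) hwij)) _ hwij
    rw [hβ, Matrix.single_apply_of_ne]
    rintro ⟨rfl, rfl⟩
    rw [Fin.rev_rev, Fin.rev_rev] at hwlk
    exact hwij hwlk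
  rw [matrix_eq_sum_single w, h.map_sum _ fun i _ => sum_mem_patAlg fun j _ =>
    single_apply_mem_patAlg hw i j, Matrix.sum_apply]
  refine Finset.sum_eq_zero fun i _ => ?_
  rw [h.map_sum _ fun j _ => single_apply_mem_patAlg hw i j, Matrix.sum_apply]
  exact Finset.sum_eq_zero fun j _ => hsingle i j

theorem map_mem_patHAlg_of_rows_eq_zero (h : IsPatternAntiInvolution F E S dag)
    {w : Matrix (Fin n) (Fin n) E} (hw : w ∈ patAlg E S)
    (hrows : ∀ i j : Fin n, n / 2 ≤ (i : ℕ) → w i j = 0) : dag w ∈ patHAlg E S :=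
  ⟨h.map_mem w hw, fun _ j hj => h.apply_eq_zero_of_apply_rev_eq_zero hw <|
    hrows _ _ (by rw [Fin.val_rev]; omega)⟩

end IsPatternAntiInvolution

theorem lambda_vanishes_on_products_in_g_lambda_general
    (F : Type) [Field F] (E : Type) [Field E] [Algebra F E]
    {n : ℕ} (S : Set (Fin n × Fin n))
    (dag : Matrix (Fin n) (Fin n) E → Matrix (Fin n) (Fin n) E)
    (hdag : IsPatternAntiInvolution F E S dag)
    (lam : Module.Dual F (Matrix (Fin n) (Fin n) E)) :
    ∀ x ∈ patAlg E S, ∀ y ∈ patAlg E S,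
      (∀ z ∈ patHAlg E S, lam (z * x) = 0) →
      (∀ z ∈ patHAlg E S, lam (x * dag z) = 0) →
      (∀ z ∈ patHAlg E S, lam (z * y) = 0) →
      (∀ z ∈ patHAlg E S, lam (y * dag z) = 0) →
      lam (x * y) = 0 := by
  intro x hx y hy _ hx_right hy_left _
  set low : Fin n → E := fun i => if (i : ℕ) < n / 2 then 1 else 0
  have hsplit : x * y = x * diagonal (1 - low) * y + x * (diagonal low * y) := by
    rw [show diagonal (1 - low) = 1 - diagonal low by rw [← diagonal_one, diagonal_sub]; rfl]
    noncomm_ring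
  have hhigh : x * diagonal (1 - low) ∈ patHAlg E S :=
    mul_diagonal_mem_patHAlg hx fun j hj => by simp [low, show (j : ℕ) < n / 2 by omega]
  have hlow : dag (diagonal low * y) ∈ patHAlg E S :=
    hdag.map_mem_patHAlg_of_rows_eq_zero (diagonal_mul_mem_patAlg hy low) fun i j hi => by
      simp [low, diagonal_mul, not_lt.2 hi]
  rw [hsplit, map_add, hy_left _ hhigh, ← hdag.invol _ (diagonal_mul_mem_patAlg hy low),
    hx_right _ hlow, add_zero]

/-- With `G = 1 + 𝔤` a pattern subgroup, `†` an anti-involution as above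
and `𝔥 = {x ∈ 𝔤 | x_ij = 0 if j ≤ n/2}`: for `λ ∈ 𝔤*`, setting
`𝔩_λ = {x ∈ 𝔤 | λ(yx) = 0 ∀ y ∈ 𝔥}`, `𝔯_λ = {x ∈ 𝔤 | λ(xy) = 0 ∀ y ∈ 𝔥†}` and
`𝔤_λ = 𝔩_λ ∩ 𝔯_λ`, one has `λ(xy) = 0` for all `x, y ∈ 𝔤_λ`. -/
theorem lambda_vanishes_on_products_in_g_lambda
    (F : Type) [Field F] [Fintype F] (E : Type) [Field E] [Fintype E] [Algebra F E]
    (hodd : ringChar F ≠ 2)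
    {n : ℕ} (S : Set (Fin n × Fin n))
    (hS1 : ∀ p ∈ S, p.1 < p.2)
    (hS2 : ∀ i j k : Fin n, (i, j) ∈ S → (j, k) ∈ S → (i, k) ∈ S)
    (dag : Matrix (Fin n) (Fin n) E → Matrix (Fin n) (Fin n) E)
    (hdag : IsPatternAntiInvolution F E S dag)
    (lam : Module.Dual F (Matrix (Fin n) (Fin n) E)) :
    ∀ x ∈ patAlg E S, ∀ y ∈ patAlg E S,
      (∀ z ∈ patHAlg E S, lam (z * x) = 0) →
      (∀ z ∈ patHAlg E S, lam (x * dag z) = 0) →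
      (∀ z ∈ patHAlg E S, lam (z * y) = 0) →
      (∀ z ∈ patHAlg E S, lam (y * dag z) = 0) →
      lam (x * y) = 0 :=
  lambda_vanishes_on_products_in_g_lambda_general F E S dag hdag lam
end
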